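/- arXiv:math/0104276 — 3 statements merged into one kernel-verified Lean document; each statement's English description precedes it below -/
import Mathlib

section
/- Let p* ⊆ 2^{<ω} be a tree with μ(lim(p*)) = 1/2 + 1/n* for some n* ≥ 1, and let m* be such that for all m ≥ m*, 1/2 + 1/n* ≤ |p* ∩ 2^m|/2^m ≤ 1/2 + 1/n* + 1/2^{n*+7}. If q₀, q₁ ⊆ p** are trees (where p** is the tree whose nodes below level m* agree with p* and which above level m* contains all extensions of nodes of p* at level m*) with μ(lim(q₀)) ≥ 1/2 + 3/(4n*) and μ(lim(q₁)) ≥ 1/2 + 3/(4n*), then μ(lim(q₀) ∩ lim(q₁)) > 1/2. -/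
/-!
Both `lim q₀` and `lim q₁` lie inside `lim p**`, which is covered by the cylinders of the nodes of
`p*` at level `m*`; hence `μ (lim q₀ ∪ lim q₁) ≤ |p* ∩ 2^{m*}| / 2^{m*} ≤ 1/2 + 1/n* + 2^{-(n*+7)}`.
Inclusion–exclusion then gives
`μ (lim q₀ ∩ lim q₁) ≥ 1 + 3/(2n*) - (1/2 + 1/n* + 2^{-(n*+7)}) > 1/2`, because `2n* < 2^{n*+7}`.
-/

open MeasureTheory Filter
open scoped ENNReal

/-- The standard product ("coin-flipping") measure on Cantor space `ℕ → Bool`: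
a probability measure giving each cylinder `[s]` measure `2^{-|s|}`. -/
def IsCantorMeasure (μ : Measure (ℕ → Bool)) : Prop :=
  IsProbabilityMeasure μ ∧
    ∀ s : List Bool,
      μ {ρ | ∀ i : Fin s.length, ρ i = s.get i} = 1 / 2 ^ s.length

def IsTree (T : Set (List Bool)) : Prop :=
  ∀ s t : List Bool, s <+: t → t ∈ T → s ∈ T

/-- The set of infinite branches of a tree `T ⊆ 2^{<ω}`. -/
def branches (T : Set (List Bool)) : Set (ℕ → Bool) :=
  {ρ | ∀ n : ℕ, (List.ofFn fun i : Fin n => ρ i) ∈ T}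

/-- The number of nodes of `T` at level `m`. -/
noncomputable def levelCard (T : Set (List Bool)) (m : ℕ) : ℕ :=
  (T ∩ {l | l.length = m}).ncard

/-- The tree `p**` of the paper, for `T = p*` and `m = m*`. -/
def extendAboveLevel (T : Set (List Bool)) (m : ℕ) : Set (List Bool) :=
  {l | (l.length ≤ m ∧ l ∈ T) ∨ (m < l.length ∧ l.take m ∈ T)}

def cylinder (s : List Bool) : Set (ℕ → Bool) :=
  {ρ | ∀ i : Fin s.length, ρ i = s.get i}

lemma measurableSet_branches (T : Set (List Bool)) : MeasurableSet (branches T) := by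
  have : branches T = ⋂ n : ℕ,
      (fun ρ : ℕ → Bool => (fun i : Fin n => ρ i)) ⁻¹' {g | List.ofFn g ∈ T} := by
    ext ρ; simp [branches]
  rw [this]
  exact MeasurableSet.iInter fun n =>
    (measurable_pi_lambda _ fun i => measurable_pi_apply _) (Set.to_countable _).measurableSet

lemma setOf_ofFn_mem_subset_biUnion_cylinder (T : Set (List Bool)) (m : ℕ) :
    {ρ : ℕ → Bool | (List.ofFn fun i : Fin m => ρ i) ∈ T} ⊆
      ⋃ s ∈ T ∩ {l | l.length = m}, cylinder s := by
  intro ρ hρ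
  refine Set.mem_biUnion (x := List.ofFn fun i : Fin m => ρ i) ⟨hρ, List.length_ofFn⟩ ?_
  intro i
  simp

lemma measure_setOf_ofFn_mem_le {μ : Measure (ℕ → Bool)} (hμ : IsCantorMeasure μ)
    (T : Set (List Bool)) (m : ℕ) :
    μ {ρ | (List.ofFn fun i : Fin m => ρ i) ∈ T} ≤ (levelCard T m : ℝ≥0∞) / 2 ^ m := by
  set F := T ∩ {l | l.length = m}
  have hF : F.Finite := (List.finite_length_eq Bool m).subset Set.inter_subset_right
  have hcyl : ∀ s ∈ hF.toFinset, μ (cylinder s) = 1 / 2 ^ m := by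
    intro s hs
    rw [← (hF.mem_toFinset.1 hs).2]
    exact hμ.2 s
  calc μ {ρ | (List.ofFn fun i : Fin m => ρ i) ∈ T}
      ≤ μ (⋃ s ∈ hF.toFinset, cylinder s) := by
        simpa only [Set.Finite.mem_toFinset] using
          measure_mono (setOf_ofFn_mem_subset_biUnion_cylinder T m)
    _ ≤ ∑ s ∈ hF.toFinset, μ (cylinder s) := measure_biUnion_finset_le _ _
    _ = (levelCard T m : ℝ≥0∞) / 2 ^ m := by
        rw [Finset.sum_congr rfl hcyl, Finset.sum_const, nsmul_eq_mul, levelCard,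
          Set.ncard_eq_toFinset_card F hF, mul_one_div]

lemma branches_subset_of_subset_extendAboveLevel {q T : Set (List Bool)} {m : ℕ}
    (hq : q ⊆ extendAboveLevel T m) :
    branches q ⊆ {ρ | (List.ofFn fun i : Fin m => ρ i) ∈ T} := by
  intro ρ hρ
  rcases hq (hρ m) with ⟨-, h⟩ | ⟨h, -⟩
  · exact h
  · simp at h

lemma lt_measure_inter_of_measure_union_add_lt {α : Type*} [MeasurableSpace α]
    {μ : Measure α} [IsFiniteMeasure μ] {s t : Set α} (ht : MeasurableSet t) {c : ℝ≥0∞}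
    (h : μ (s ∪ t) + c < μ s + μ t) : c < μ (s ∩ t) := by
  rwa [← measure_union_add_inter s ht, ENNReal.add_lt_add_iff_left (measure_ne_top μ _)] at h

lemma two_mul_lt_two_pow_add_seven (n : ℕ) : 2 * n < 2 ^ (n + 7) :=
  calc 2 * n < 2 * 2 ^ n := by have := Nat.lt_two_pow_self (n := n); omega
    _ ≤ 2 ^ (n + 7) := by rw [← pow_succ']; exact Nat.pow_le_pow_right (by norm_num) (by omega)

lemma half_add_inv_add_inv_two_pow_add_half_lt {n : ℕ} (hn : 1 ≤ n) :
    1/2 + 1/(n : ℝ≥0∞) + 1/2^(n+7) + 1/2 <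
      (1/2 + 3/(4 * (n : ℝ≥0∞))) + (1/2 + 3/(4 * (n : ℝ≥0∞))) := by
  have hn0 : (n : ℝ≥0∞) ≠ 0 := by exact_mod_cast (by omega : n ≠ 0)
  rw [← ENNReal.toReal_lt_toReal (by simp; omega) (by simp [ENNReal.div_eq_top, hn0])]
  simp only [one_div, ne_eq, ENNReal.add_eq_top, ENNReal.inv_eq_top, OfNat.ofNat_ne_zero, hn0,
    or_self, Nat.add_eq_zero_iff, and_false, not_false_eq_true, pow_eq_zero_iff,
    ENNReal.toReal_add, ENNReal.toReal_inv, ENNReal.toReal_ofNat, ENNReal.toReal_natCast,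
    ENNReal.toReal_pow, ENNReal.div_eq_top, mul_eq_zero, ENNReal.ofNat_ne_top, false_and,
    ENNReal.toReal_div, ENNReal.toReal_mul]
  have hpow : (2 * n : ℝ) < 2 ^ (n + 7) := by exact_mod_cast two_mul_lt_two_pow_add_seven n
  have hε : ((2:ℝ) ^ (n + 7))⁻¹ < (2 * (n:ℝ))⁻¹ := inv_strictAnti₀ (by positivity) hpow
  have hsplit : 3 / (4 * (n:ℝ)) + 3 / (4 * n) = (n:ℝ)⁻¹ + (2 * (n:ℝ))⁻¹ := by
    field_simp; ring
  linarith

theorem stmt_0_general (μ : Measure (ℕ → Bool)) (hμ : IsCantorMeasure μ)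
    (nstar : ℕ) (hn : 1 ≤ nstar) (pstar : Set (List Bool))
    (mstar : ℕ)
    (hm : ∀ m ≥ mstar,
      1/2 + 1/(nstar : ℝ≥0∞) ≤ (levelCard pstar m : ℝ≥0∞) / 2^m ∧
      (levelCard pstar m : ℝ≥0∞) / 2^m ≤ 1/2 + 1/(nstar : ℝ≥0∞) + 1/2^(nstar+7))
    (q0 q1 : Set (List Bool))
    (hq0sub : q0 ⊆ {l | (l.length ≤ mstar ∧ l ∈ pstar) ∨
      (mstar < l.length ∧ l.take mstar ∈ pstar)})
    (hq1sub : q1 ⊆ {l | (l.length ≤ mstar ∧ l ∈ pstar) ∨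
      (mstar < l.length ∧ l.take mstar ∈ pstar)})
    (hm0 : 1/2 + 3/(4 * (nstar : ℝ≥0∞)) ≤ μ (branches q0))
    (hm1 : 1/2 + 3/(4 * (nstar : ℝ≥0∞)) ≤ μ (branches q1)) :
    1/2 < μ (branches q0 ∩ branches q1) := by
  have := hμ.1
  have hunion : μ (branches q0 ∪ branches q1) ≤ 1/2 + 1/(nstar : ℝ≥0∞) + 1/2^(nstar+7) :=
    calc μ (branches q0 ∪ branches q1)
        ≤ μ {ρ | (List.ofFn fun i : Fin mstar => ρ i) ∈ pstar} :=
          measure_mono (Set.union_subset (branches_subset_of_subset_extendAboveLevel hq0sub)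
            (branches_subset_of_subset_extendAboveLevel hq1sub))
      _ ≤ (levelCard pstar mstar : ℝ≥0∞) / 2 ^ mstar := measure_setOf_ofFn_mem_le hμ _ _
      _ ≤ _ := (hm mstar le_rfl).2
  refine lt_measure_inter_of_measure_union_add_lt (measurableSet_branches q1) ?_
  calc μ (branches q0 ∪ branches q1) + 1/2
      ≤ 1/2 + 1/(nstar : ℝ≥0∞) + 1/2^(nstar+7) + 1/2 := by gcongr
    _ < (1/2 + 3/(4 * (nstar : ℝ≥0∞))) + (1/2 + 3/(4 * (nstar : ℝ≥0∞))) :=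
        half_add_inv_add_inv_two_pow_add_half_lt hn
    _ ≤ μ (branches q0) + μ (branches q1) := add_le_add hm0 hm1

theorem stmt_0 (μ : Measure (ℕ → Bool)) (hμ : IsCantorMeasure μ)
    (nstar : ℕ) (hn : 1 ≤ nstar) (pstar : Set (List Bool))
    (hps : IsTree pstar)
    (hmeas : μ (branches pstar) = 1/2 + 1/(nstar : ℝ≥0∞))
    (mstar : ℕ)
    (hm : ∀ m ≥ mstar,
      1/2 + 1/(nstar : ℝ≥0∞) ≤ (levelCard pstar m : ℝ≥0∞) / 2^m ∧
      (levelCard pstar m : ℝ≥0∞) / 2^m ≤ 1/2 + 1/(nstar : ℝ≥0∞) + 1/2^(nstar+7))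
    (q0 q1 : Set (List Bool)) (hq0 : IsTree q0) (hq1 : IsTree q1)
    (hq0sub : q0 ⊆ {l | (l.length ≤ mstar ∧ l ∈ pstar) ∨
      (mstar < l.length ∧ l.take mstar ∈ pstar)})
    (hq1sub : q1 ⊆ {l | (l.length ≤ mstar ∧ l ∈ pstar) ∨
      (mstar < l.length ∧ l.take mstar ∈ pstar)})
    (hm0 : 1/2 + 3/(4 * (nstar : ℝ≥0∞)) ≤ μ (branches q0))
    (hm1 : 1/2 + 3/(4 * (nstar : ℝ≥0∞)) ≤ μ (branches q1)) :
    1/2 < μ (branches q0 ∩ branches q1) :=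
  stmt_0_general μ hμ nstar hn pstar mstar hm q0 q1 hq0sub hq1sub hm0 hm1
end

section
/- Let T ⊆ 2^{<ω} be a tree with no leaves such that μ(lim(T)) > 0 and suppose lim_{n→∞} |T ∩ 2^n|/2^n exists and is positive. Then lim_{n→∞} μ({ρ' ∈ 2^ω : ∃ρ ∈ lim(T), ρ'(k) = ρ(k) for all k ≥ n}) = 1. -/
open MeasureTheory Filter
open scoped ENNReal

open Set

/-!
Write `c k = |T ∩ 2^k| / 2^k` and `A n` for the set of reals agreeing from `n` on with a branch.
A real lies in `A n` iff for every `m` its bits `n, …, n+m-1`, appended to some string of length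
`n`, give a node of `T`: one of the finitely many candidate strings works for infinitely many `m`,
hence for all.
So `A n` is the decreasing intersection of the clopen sets `B n m` given by these conditions.
A node of `T` of length `n + m` is determined by its first `n` bits, a node of `T`, and its
remaining `m` bits, so counting gives `μ (B n m) ≥ c (n + m) / c n`. Letting `m → ∞` yields
`μ (A n) ≥ L / c n`, which tends to `1`.
-/

def initSeg (ρ : ℕ → Bool) (n : ℕ) : List Bool := List.ofFn fun i : Fin n => ρ i

@[simp] lemma length_initSeg (ρ : ℕ → Bool) (n : ℕ) : (initSeg ρ n).length = n :=
  List.length_ofFn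

lemma initSeg_add (ρ : ℕ → Bool) (n m : ℕ) :
    initSeg ρ (n + m) = initSeg ρ n ++ initSeg (fun k => ρ (n + k)) m := by
  simp [initSeg, List.ofFn_add]

lemma drop_initSeg (ρ : ℕ → Bool) (n m : ℕ) :
    (initSeg ρ (n + m)).drop n = initSeg (fun k => ρ (n + k)) m := by
  rw [initSeg_add, List.drop_left' (length_initSeg ρ n)]

lemma initSeg_prefix_initSeg (ρ : ℕ → Bool) {a b : ℕ} (h : a ≤ b) :
    initSeg ρ a <+: initSeg ρ b := by
  obtain ⟨m, rfl⟩ := Nat.exists_eq_add_of_le h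
  rw [initSeg_add]
  exact List.prefix_append _ _

lemma initSeg_length_eq_iff (ρ : ℕ → Bool) (s : List Bool) :
    initSeg ρ s.length = s ↔ ∀ i : Fin s.length, ρ i = s.get i := by
  refine ⟨fun h i => ?_, fun h => List.ext_get (by simp) fun i _ hi => ?_⟩
  · simpa [initSeg] using List.get_of_eq h ⟨i, by simp⟩
  · simpa [initSeg] using h ⟨i, hi⟩

lemma exists_initSeg_eq_and_tail_eq (σ : List Bool) (ρ' : ℕ → Bool) :
    ∃ ρ : ℕ → Bool, initSeg ρ σ.length = σ ∧ ∀ k, σ.length ≤ k → ρ k = ρ' k := by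
  refine ⟨fun k => if h : k < σ.length then σ[k] else ρ' k, ?_, fun k hk => ?_⟩
  · exact (initSeg_length_eq_iff _ σ).2 fun i => by simp
  · simp [not_lt.2 hk]

lemma ncard_setOf_length_eq (α : Type*) [Fintype α] (n : ℕ) :
    {l : List α | l.length = n}.ncard = Fintype.card α ^ n := by
  rw [← Nat.card_coe_set_eq, ← card_vector, ← Nat.card_eq_fintype_card]
  rfl

lemma measurableSet_setOf_initSeg_mem (n : ℕ) (S : Set (List Bool)) :
    MeasurableSet {ρ : ℕ → Bool | initSeg ρ n ∈ S} :=
  (measurable_pi_lambda (fun (ρ : ℕ → Bool) (i : Fin n) => ρ i)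
      fun i => measurable_pi_apply (i : ℕ))
    (MeasurableSet.of_discrete (s := {f : Fin n → Bool | List.ofFn f ∈ S}))

lemma IsCantorMeasure.measure_setOf_initSeg_mem {μ : Measure (ℕ → Bool)}
    (hμ : IsCantorMeasure μ) {n : ℕ} {S : Set (List Bool)} (hS : ∀ s ∈ S, s.length = n) :
    μ {ρ | initSeg ρ n ∈ S} = S.ncard / 2 ^ n := by
  have hfin : S.Finite := (List.finite_length_eq Bool n).subset hS
  have hfiber : ∀ s ∈ hfin.toFinset,
      μ ((initSeg · n) ⁻¹' {s}) = (2 ^ n : ℝ≥0∞)⁻¹ := by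
    intro s hs
    rw [Finite.mem_toFinset] at hs
    have : (initSeg · n) ⁻¹' {s} = {ρ | ∀ i : Fin s.length, ρ i = s.get i} := by
      ext ρ
      rw [mem_preimage, mem_singleton_iff, mem_ofPred_eq, ← initSeg_length_eq_iff, hS s hs]
    rw [this, hμ.2 s, hS s hs, one_div]
  have hpre : {ρ | initSeg ρ n ∈ S} = (initSeg · n) ⁻¹' ↑hfin.toFinset := by
    simp [preimage]
  rw [hpre, ← sum_measure_preimage_singleton _ fun s _ => measurableSet_setOf_initSeg_mem n {s},
    Finset.sum_congr rfl hfiber, Finset.sum_const, nsmul_eq_mul, ncard_eq_toFinset_card S hfin,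
    div_eq_mul_inv]

section Tree

variable {T : Set (List Bool)}

lemma IsTree.mem_branches_of_forall_add (hT : IsTree T) {ρ : ℕ → Bool} {n : ℕ}
    (h : ∀ m, initSeg ρ (n + m) ∈ T) : ρ ∈ branches T := fun k =>
  hT _ _ (initSeg_prefix_initSeg ρ (Nat.le_add_left k n)) (h k)

lemma IsTree.exists_forall_append_mem (hT : IsTree T) {F : Set (List Bool)} (hF : F.Finite)
    {τ : ℕ → List Bool} (hτ : ∀ ⦃a b⦄, a ≤ b → τ a <+: τ b)
    (h : ∀ m, ∃ σ ∈ F, σ ++ τ m ∈ T) : ∃ σ ∈ F, ∀ m, σ ++ τ m ∈ T := by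
  by_contra! hbad
  choose! g hg using hbad
  obtain ⟨M, hM⟩ := (hF.image g).bddAbove
  obtain ⟨σ, hσF, hσT⟩ := h M
  have hle : g σ ≤ M := hM (mem_image_of_mem g hσF)
  exact hg σ hσF (hT _ _ ((List.prefix_append_right_inj σ).2 (hτ hle)) hσT)

def agreeLevel (T : Set (List Bool)) (n m : ℕ) : Set (List Bool) :=
  {u | u.length = n + m ∧ ∃ σ : List Bool, σ.length = n ∧ σ ++ u.drop n ∈ T}

def agreeWithBranchFrom (T : Set (List Bool)) (n : ℕ) : Set (ℕ → Bool) :=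
  {ρ' | ∃ ρ ∈ branches T, ∀ k, n ≤ k → ρ' k = ρ k}

lemma initSeg_mem_agreeLevel_iff {ρ : ℕ → Bool} {n m : ℕ} :
    initSeg ρ (n + m) ∈ agreeLevel T n m ↔
      ∃ σ : List Bool, σ.length = n ∧ σ ++ initSeg (fun k => ρ (n + k)) m ∈ T := by
  simp [agreeLevel, drop_initSeg]

lemma IsTree.antitone_setOf_initSeg_mem_agreeLevel (hT : IsTree T) (n : ℕ) :
    Antitone fun m => {ρ : ℕ → Bool | initSeg ρ (n + m) ∈ agreeLevel T n m} := by
  intro m m' hm ρ hρ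
  obtain ⟨σ, hσ, hσT⟩ := initSeg_mem_agreeLevel_iff.1 hρ
  exact initSeg_mem_agreeLevel_iff.2
    ⟨σ, hσ, hT _ _ ((List.prefix_append_right_inj σ).2 (initSeg_prefix_initSeg _ hm)) hσT⟩

lemma IsTree.agreeWithBranchFrom_eq_iInter (hT : IsTree T) (n : ℕ) :
    agreeWithBranchFrom T n = ⋂ m, {ρ' | initSeg ρ' (n + m) ∈ agreeLevel T n m} := by
  ext ρ'
  simp only [agreeWithBranchFrom, mem_iInter, mem_ofPred_eq, initSeg_mem_agreeLevel_iff]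
  constructor
  · rintro ⟨ρ, hρ, hagree⟩ m
    refine ⟨initSeg ρ n, length_initSeg ρ n, ?_⟩
    have htail : (fun k => ρ' (n + k)) = fun k => ρ (n + k) :=
      funext fun k => hagree _ (Nat.le_add_right n k)
    rw [htail, ← initSeg_add]
    exact hρ (n + m)
  · intro h
    obtain ⟨σ, hσ, hσT⟩ := hT.exists_forall_append_mem (List.finite_length_eq Bool n)
      (fun _ _ => initSeg_prefix_initSeg _) h
    obtain ⟨ρ, hρσ, hρ⟩ := exists_initSeg_eq_and_tail_eq σ ρ'
    rw [hσ] at hρσ hρ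
    have htail : (fun k => ρ (n + k)) = fun k => ρ' (n + k) :=
      funext fun k => hρ _ (Nat.le_add_right n k)
    refine ⟨ρ, hT.mem_branches_of_forall_add (n := n) fun m => ?_, fun k hk => (hρ k hk).symm⟩
    rw [initSeg_add, hρσ, htail]
    exact hσT m

lemma IsTree.pow_mul_levelCard_add_le (hT : IsTree T) (n m : ℕ) :
    2 ^ n * levelCard T (n + m) ≤ levelCard T n * (agreeLevel T n m).ncard := by
  have hmaps : MapsTo (fun p : List Bool × List Bool => (p.2.take n, p.1 ++ p.2.drop n))
      ({l | l.length = n} ×ˢ (T ∩ {l | l.length = n + m}))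
      ((T ∩ {l | l.length = n}) ×ˢ agreeLevel T n m) := by
    rintro ⟨σ, v⟩ ⟨hσ : σ.length = n, hvT, hv : v.length = n + m⟩
    refine ⟨⟨hT _ v (List.take_prefix n v) hvT, by simp [hv]⟩, by simp [hσ, hv], v.take n,
      by simp [hv], ?_⟩
    rwa [List.drop_left' hσ, List.take_append_drop]
  have hinj : InjOn (fun p : List Bool × List Bool => (p.2.take n, p.1 ++ p.2.drop n))
      ({l | l.length = n} ×ˢ (T ∩ {l | l.length = n + m})) := by
    rintro ⟨σ₁, v₁⟩ ⟨hσ₁ : σ₁.length = n, -, -⟩ ⟨σ₂, v₂⟩ ⟨hσ₂ : σ₂.length = n, -, -⟩ heq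
    simp only [Prod.mk.injEq] at heq
    obtain ⟨htake, happ⟩ := heq
    obtain ⟨rfl, hdrop⟩ := List.append_inj happ (hσ₁.trans hσ₂.symm)
    rw [← List.take_append_drop n v₁, htake, hdrop, List.take_append_drop]
  have hfin : ((T ∩ {l | l.length = n}) ×ˢ agreeLevel T n m).Finite :=
    ((List.finite_length_eq Bool n).inter_of_right T).prod
      ((List.finite_length_eq Bool (n + m)).subset fun _ hu => hu.1)
  have := ncard_le_ncard_of_injOn _ hmaps hinj hfin
  rwa [ncard_prod, ncard_prod, ncard_setOf_length_eq, Fintype.card_bool] at this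

end Tree

noncomputable def levelDensity (T : Set (List Bool)) (n : ℕ) : ℝ := levelCard T n / 2 ^ n

lemma IsTree.levelDensity_add_div_le {T : Set (List Bool)} (hT : IsTree T) (n m : ℕ) :
    levelDensity T (n + m) / levelDensity T n ≤ (agreeLevel T n m).ncard / 2 ^ (n + m) := by
  rcases (Nat.zero_le (levelCard T n)).eq_or_lt with h0 | hpos
  -- if `levelCard T n = 0`, the left side is `0` by the convention `x / 0 = 0`
  · simp only [levelDensity, ← h0, CharP.cast_eq_zero, zero_div, div_zero]
    positivity
  have hcount : (2 : ℝ) ^ n * levelCard T (n + m) ≤ levelCard T n * (agreeLevel T n m).ncard := by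
    exact_mod_cast hT.pow_mul_levelCard_add_le n m
  rw [levelDensity, levelDensity, div_div_div_eq, div_le_div_iff₀ (by positivity) (by positivity)]
  calc (levelCard T (n + m) : ℝ) * 2 ^ n * 2 ^ (n + m)
      = (2 ^ n * levelCard T (n + m)) * 2 ^ (n + m) := by ring
    _ ≤ (levelCard T n * (agreeLevel T n m).ncard) * 2 ^ (n + m) := by gcongr
    _ = (agreeLevel T n m).ncard * (2 ^ (n + m) * levelCard T n) := by ring

lemma IsCantorMeasure.ofReal_div_levelDensity_le {μ : Measure (ℕ → Bool)}
    (hμ : IsCantorMeasure μ) {T : Set (List Bool)} (hT : IsTree T) {L : ℝ}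
    (hlim : Tendsto (levelDensity T) atTop (nhds L)) (n : ℕ) :
    ENNReal.ofReal (L / levelDensity T n) ≤ μ (agreeWithBranchFrom T n) := by
  have := hμ.1
  have hlim_approx : Tendsto (fun m => μ {ρ | initSeg ρ (n + m) ∈ agreeLevel T n m}) atTop
      (nhds (μ (agreeWithBranchFrom T n))) := by
    rw [hT.agreeWithBranchFrom_eq_iInter]
    exact tendsto_measure_iInter_atTop
      (fun m => (measurableSet_setOf_initSeg_mem _ _).nullMeasurableSet)
      (hT.antitone_setOf_initSeg_mem_agreeLevel n) ⟨0, measure_ne_top μ _⟩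
  have hlim_ratio : Tendsto (fun m => ENNReal.ofReal (levelDensity T (n + m) / levelDensity T n))
      atTop (nhds (ENNReal.ofReal (L / levelDensity T n))) :=
    (ENNReal.tendsto_ofReal ((hlim.comp (tendsto_add_atTop_nat n)).div_const _)).congr
      fun m => by simp [add_comm]
  refine le_of_tendsto_of_tendsto' hlim_ratio hlim_approx fun m => ?_
  rw [hμ.measure_setOf_initSeg_mem fun _ hu => hu.1]
  calc ENNReal.ofReal (levelDensity T (n + m) / levelDensity T n)
      ≤ ENNReal.ofReal ((agreeLevel T n m).ncard / 2 ^ (n + m)) :=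
        ENNReal.ofReal_le_ofReal (hT.levelDensity_add_div_le n m)
    _ = (agreeLevel T n m).ncard / 2 ^ (n + m) := by
        rw [ENNReal.ofReal_div_of_pos (by positivity), ENNReal.ofReal_natCast,
          ENNReal.ofReal_pow zero_le_two, ENNReal.ofReal_ofNat]

theorem stmt_1_general (μ : Measure (ℕ → Bool)) (hμ : IsCantorMeasure μ)
    (T : Set (List Bool)) (hT : IsTree T)
    (L : ℝ) (hL : 0 < L)
    (hlim : Tendsto (fun n => (levelCard T n : ℝ) / 2 ^ n) atTop (nhds L)) :
    Tendsto
      (fun n => μ {ρ' | ∃ ρ ∈ branches T, ∀ k, n ≤ k → ρ' k = ρ k})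
      atTop (nhds 1) := by
  have := hμ.1
  have hratio : Tendsto (fun n => ENNReal.ofReal (L / levelDensity T n)) atTop (nhds 1) := by
    have h : Tendsto (fun n => L / levelDensity T n) atTop (nhds (L / L)) :=
      tendsto_const_nhds.div hlim hL.ne'
    rw [div_self hL.ne'] at h
    simpa using ENNReal.tendsto_ofReal h
  exact tendsto_of_tendsto_of_tendsto_of_le_of_le hratio tendsto_const_nhds
    (hμ.ofReal_div_levelDensity_le hT hlim) fun n => prob_le_one

theorem stmt_1 (μ : Measure (ℕ → Bool)) (hμ : IsCantorMeasure μ)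
    (T : Set (List Bool)) (hT : IsTree T)
    (hnoleaf : ∀ l ∈ T, ∃ b : Bool, l ++ [b] ∈ T)
    (hpos : 0 < μ (branches T))
    (L : ℝ) (hL : 0 < L)
    (hlim : Tendsto (fun n => (levelCard T n : ℝ) / 2 ^ n) atTop (nhds L)) :
    Tendsto
      (fun n => μ {ρ' | ∃ ρ ∈ branches T, ∀ k, n ≤ k → ρ' k = ρ k})
      atTop (nhds 1) :=
  stmt_1_general μ hμ T hT L hL hlim
end

section
/- A real η ∈ 2^ω is needed for a binary relation R (i.e., every R-adequate set Y contains some y with η Turing-computable from y) if and only if there exists x ∈ dom(R) such that for all y ∈ range(R), if x R y then η is Turing-reducible to y. -/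
/-- Relativized partial recursiveness: partial functions recursive in the oracle `O`.
This mirrors Mathlib's `Nat.Partrec`, with an extra constructor for the oracle. -/
inductive RecursiveInNat (O : ℕ → ℕ) : (ℕ →. ℕ) → Prop
  | zero : RecursiveInNat O (pure 0)
  | succ : RecursiveInNat O ↑Nat.succ
  | left : RecursiveInNat O ↑fun n : ℕ => n.unpair.1
  | right : RecursiveInNat O ↑fun n : ℕ => n.unpair.2
  | oracle : RecursiveInNat O ↑O
  | pair {f g : ℕ →. ℕ} : RecursiveInNat O f → RecursiveInNat O g →
      RecursiveInNat O fun n => Nat.pair <$> f n <*> g n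
  | comp {f g : ℕ →. ℕ} : RecursiveInNat O f → RecursiveInNat O g →
      RecursiveInNat O fun n => g n >>= f
  | prec {f g : ℕ →. ℕ} : RecursiveInNat O f → RecursiveInNat O g →
      RecursiveInNat O (Nat.unpaired fun a n =>
        n.rec (f a) fun y IH => do let i ← IH; g (Nat.pair a (Nat.pair y i)))
  | rfind {f : ℕ →. ℕ} : RecursiveInNat O f →
      RecursiveInNat O fun a => Nat.rfind fun n => (fun m => m = 0) <$> f (Nat.pair a n)

/-- Turing reducibility `η ≤_T ν` for elements of Cantor space. -/
def TuringLE (f g : ℕ → Bool) : Prop :=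
  RecursiveInNat (fun n => (g n).toNat) ((fun n => (f n).toNat : ℕ → ℕ) : ℕ →. ℕ)

/-- `Y` is an `R`-adequate set: `Y ⊆ range R` and every `x ∈ dom R` is `R`-related
to some member of `Y`. -/
def Adequate (R : (ℕ → Bool) → (ℕ → Bool) → Prop) (Y : Set (ℕ → Bool)) : Prop :=
  (∀ y ∈ Y, ∃ x, R x y) ∧ ∀ x, (∃ y, R x y) → ∃ y ∈ Y, R x y

/-- `η` is needed for `R`: every `R`-adequate set contains an element computing `η`. -/
def Needed (η : ℕ → Bool) (R : (ℕ → Bool) → (ℕ → Bool) → Prop) : Prop :=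
  ∀ Y : Set (ℕ → Bool), Adequate R Y → ∃ y ∈ Y, TuringLE η y

theorem adequate_setOf_mem_range_and {R : (ℕ → Bool) → (ℕ → Bool) → Prop} {P : (ℕ → Bool) → Prop}
    (h : ∀ x, (∃ y, R x y) → ∃ y, R x y ∧ P y) :
    Adequate R {y | (∃ x, R x y) ∧ P y} := by
  refine ⟨fun y hy => hy.1, fun x hx => ?_⟩
  obtain ⟨y, hxy, hPy⟩ := h x hx
  exact ⟨y, ⟨⟨x, hxy⟩, hPy⟩, hxy⟩

theorem needed_of_forall_related_turingLE {η : ℕ → Bool} {R : (ℕ → Bool) → (ℕ → Bool) → Prop}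
    {x : ℕ → Bool} (hx : ∃ y, R x y) (hη : ∀ y, R x y → TuringLE η y) : Needed η R := by
  rintro Y ⟨-, hcover⟩
  obtain ⟨y, hyY, hxy⟩ := hcover x hx
  exact ⟨y, hyY, hη y hxy⟩

theorem exists_forall_related_turingLE_of_needed {η : ℕ → Bool}
    {R : (ℕ → Bool) → (ℕ → Bool) → Prop} (hη : Needed η R) :
    ∃ x, (∃ y, R x y) ∧ ∀ y, R x y → TuringLE η y := by
  by_contra! hnone
  -- Otherwise the elements of the range that do not compute `η` already form an adequate set.
  obtain ⟨y, ⟨-, hny⟩, hy⟩ := hη _ (adequate_setOf_mem_range_and hnone)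
  exact hny hy

theorem stmt_3 (η : ℕ → Bool) (R : (ℕ → Bool) → (ℕ → Bool) → Prop) :
    Needed η R ↔ ∃ x, (∃ y, R x y) ∧ ∀ y, R x y → TuringLE η y :=
  ⟨exists_forall_related_turingLE_of_needed,
    fun ⟨_, hx, hη⟩ => needed_of_forall_related_turingLE hx hη⟩
end
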